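/- arXiv:1812.04231 — 2 statements merged into one kernel-verified Lean document; each statement's English description precedes it below -/
import Mathlib

section
/- The isomorphism μ: M_u → H_u X_∅ restricts to an isomorphism of left H_{A_{±1},u}-modules from M_{A_{±1},u} onto H_{A_{±1},u} X_∅. -/
/-! Injectivity is inherited from `μ`; the content is that `μ` maps `M_{A±1,u}` onto
`H_{A±1,u} X_∅`, and since `μ(h a_1) = h X_∅` it suffices that `M_{A±1,u} = H_{A±1,u} a_1`.

The coefficients of the four rules for `T_s a_z` lie in `ℤ[u]`, so `M_{A,u}` is stable under
every `T_s`, hence under `H_{A,u}`, and contains `H_{A,u} a_1`. Conversely, for `z ≠ 1` choose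
a left descent `s` of `z` and set `z' = s ⋉ z`. Then `s ⋉ z' = z`, `ℓ(z') < ℓ(z)` and `s` is an
ascent of `z'`, so the ascent rules give `a_z = T_s a_{z'}` or `a_z = (u+1)⁻¹ (T_s - u) a_{z'}`;
induction on `ℓ(z)` puts every `a_z` in `H_{A±1,u} a_1`. The one Coxeter-theoretic input,
`ℓ(s z s^*) = ℓ(z) - 2` when `s z ≠ z s^*`, is itself read off from the module:
`ℓ(s z s^*) = ℓ(z)` would force `u⁴ = u²`. -/

set_option synthInstance.maxHeartbeats 1000000
set_option maxHeartbeats 2000000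

open scoped Classical TensorProduct

noncomputable section

namespace IUIM

/-- The field `ℚ(u)` of rational functions; `u` is `RatFunc.X`. -/
abbrev Fq : Type := RatFunc ℚ

/-- The Laurent polynomial subring `ℤ[u, u⁻¹]` of `ℚ(u)`. -/
def Ar : Subring Fq := Subring.closure {RatFunc.X, (RatFunc.X)⁻¹}

/-- The subring `A₋₁ = ℤ[u, u⁻¹, (u+1)⁻¹]` of `ℚ(u)`. -/
def Am1 : Subring Fq := Subring.closure {RatFunc.X, (RatFunc.X)⁻¹, (RatFunc.X + 1)⁻¹}

/-- The subring `A±₁ = ℤ[u, u⁻¹, (u+1)⁻¹, (u-1)⁻¹]` of `ℚ(u)`. -/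
def Apm : Subring Fq :=
  Subring.closure {RatFunc.X, (RatFunc.X)⁻¹, (RatFunc.X + 1)⁻¹, (RatFunc.X - 1)⁻¹}

lemma X_mem_Am1 : (RatFunc.X : Fq) ∈ Am1 := Subring.subset_closure (by simp)
lemma X_mem_Apm : (RatFunc.X : Fq) ∈ Apm := Subring.subset_closure (by simp)

/-- `u` as an element of `A±₁`. -/
def uApm : ↥Apm := ⟨RatFunc.X, X_mem_Apm⟩
/-- `u` as an element of `A₋₁`. -/
def uAm1 : ↥Am1 := ⟨RatFunc.X, X_mem_Am1⟩

variable {B W : Type*} [Group W] {M : CoxeterMatrix B} (cs : CoxeterSystem M W) (star : W ≃* W)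

/-- The Bruhat order on `W`, via the subword property: `x ≤ w` iff some reduced word
for `w` contains a reduced word for `x` as a subword. -/
def BruhatLE (x w : W) : Prop :=
  ∃ ω : List B, cs.IsReduced ω ∧ cs.wordProd ω = w ∧
    ∃ ω' : List B, ω'.Sublist ω ∧ cs.IsReduced ω' ∧ cs.wordProd ω' = x

/-- The strict Bruhat order. -/
def BruhatLT (x w : W) : Prop := BruhatLE cs x w ∧ x ≠ w

/-- The twisted product `s ⋉ w`: it is `s*w` if `s*w = w*s^*`, and `s*w*s^*` otherwise. -/
def twMul (i : B) (w : W) : W :=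
  if cs.simple i * w = w * star (cs.simple i) then cs.simple i * w
  else cs.simple i * w * star (cs.simple i)

/-- `twProd [i₁,...,iₖ] = sᵢ₁ ⋉ (sᵢ₂ ⋉ ( ⋯ ⋉ (sᵢₖ ⋉ 1)))`. -/
def twProd (ω : List B) : W := ω.foldr (twMul cs star) 1

/-- The minimal length of an `I⋆`-expression for `w` (the rank function `ρ`). -/
def rho (w : W) : ℕ := sInf {k | ∃ ω : List B, ω.length = k ∧ twProd cs star ω = w}

/-- `ω` is a reduced `I⋆`-expression for `w`: its twisted product is `w` and it has
minimal length among all such expressions. -/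
def IsRedI (ω : List B) (w : W) : Prop :=
  twProd cs star ω = w ∧ ∀ ω' : List B, twProd cs star ω' = w → ω.length ≤ ω'.length

/-- The statistic `ℓ^*` computed from a word `(i₁, …, i_k)`: the number of indices `t`
such that `s_{i_t} w_t = w_t (s_{i_t})^*`, where `w_t = s_{i_t} ⋉ ⋯ ⋉ s_{i_1} ⋉ w` is the
corresponding tail twisted product `s_{i_{t+1}} ⋉ ⋯ ⋉ s_{i_k} ⋉ 1`. -/
def lstarWord : List B → ℕ
  | [] => 0
  | i :: ω =>
      (if cs.simple i * twProd cs star ω = twProd cs star ω * star (cs.simple i) then 1 else 0)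
        + lstarWord ω

lemma twMul_mem (hst : ∀ v, star (star v) = v) (i : B) {w : W} (hw : star w = w⁻¹) :
    star (twMul cs star i w) = (twMul cs star i w)⁻¹ := by
  unfold twMul
  split_ifs with h
  · have h2 : star (cs.simple i) = w⁻¹ * (cs.simple i * w) := by rw [h]; group
    rw [map_mul, hw, h2, mul_inv_rev, cs.inv_simple i]
    group
  · have hs : star (cs.simple i) * star (cs.simple i) = 1 := by
      rw [← map_mul, cs.simple_mul_simple_self, map_one]
    have hsinv : (star (cs.simple i))⁻¹ = star (cs.simple i) := by
      exact (eq_inv_of_mul_eq_one_left hs).symm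
    rw [map_mul, map_mul, hw, hst, mul_inv_rev, mul_inv_rev, hsinv, cs.inv_simple i]
    group

/-- `s ⋉ w` as a twisted involution. -/
def twK (hst : ∀ v, star (star v) = v) (i : B) (z : {w : W // star w = w⁻¹}) :
    {w : W // star w = w⁻¹} :=
  ⟨twMul cs star i z.1, twMul_mem cs star hst i z.2⟩

/-- The identity element as a twisted involution. -/
def oneI : {w : W // star w = w⁻¹} := ⟨1, by simp⟩

/-- `T` is the standard basis of an Iwahori–Hecke algebra with Hecke parameter `u ^ 2`
(over a ground ring `R`, with `u ∈ R`): `T_w T_{w'} = T_{w w'}` whenever lengths add, and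
`(T_s + 1)(T_s - u²) = 0` for all simple reflections `s`. -/
def IsHecke {R H : Type*} [CommRing R] [Ring H] [Algebra R H] (u : R) (T : Module.Basis W R H) :
    Prop :=
  T 1 = 1 ∧
  (∀ x y : W, cs.length (x * y) = cs.length x + cs.length y → T x * T y = T (x * y)) ∧
  (∀ i : B, (T (cs.simple i) + 1) * (T (cs.simple i) - algebraMap R H (u ^ 2)) = 0)

/-- The Lusztig–Vogan rules for the `u`-deformed involution module: the requirements on
the action `act` of the standard basis elements `T_s` on the basis vectors `e z = a_z`
indexed by the twisted involutions. -/
def LVRules {R Mu : Type*} [CommRing R] [AddCommGroup Mu] [Module R Mu]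
    (hst : ∀ v, star (star v) = v) (u : R)
    (e : {w : W // star w = w⁻¹} → Mu) (act : W → Mu → Mu) : Prop :=
  ∀ (i : B) (z : {w : W // star w = w⁻¹}),
    (cs.simple i * z.1 = z.1 * star (cs.simple i) →
        BruhatLT cs z.1 (cs.simple i * z.1) →
      act (cs.simple i) (e z) = u • e z + (u + 1) • e (twK cs star hst i z)) ∧
    (cs.simple i * z.1 = z.1 * star (cs.simple i) →
        BruhatLT cs (cs.simple i * z.1) z.1 →
      act (cs.simple i) (e z) =
        (u ^ 2 - u - 1) • e z + (u ^ 2 - u) • e (twK cs star hst i z)) ∧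
    (cs.simple i * z.1 ≠ z.1 * star (cs.simple i) →
        BruhatLT cs z.1 (cs.simple i * z.1) →
      act (cs.simple i) (e z) = e (twK cs star hst i z)) ∧
    (cs.simple i * z.1 ≠ z.1 * star (cs.simple i) →
        BruhatLT cs (cs.simple i * z.1) z.1 →
      act (cs.simple i) (e z) = (u ^ 2 - 1) • e z + u ^ 2 • e (twK cs star hst i z))

/-- The action of the Hecke algebra on the space `Hh` of all formal (possibly infinite)
sums `∑ c_x T_x`, described in coordinates: the `x`-coordinate of `h • ξ` is
`∑ᶠ y, ξ_y ⬝ (coefficient of T_x in h ⬝ T_y)`. -/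
def IsHatAction {R H : Type*} [CommRing R] [Ring H] [Algebra R H] (T : Module.Basis W R H)
    {Hh : Type*} [AddCommGroup Hh] [Module R Hh] [Module H Hh]
    (coords : Hh ≃ₗ[R] (W → R)) : Prop :=
  ∀ (h : H) (ξ : Hh) (x : W), coords (h • ξ) x = ∑ᶠ y : W, coords ξ y * (T.repr (h * T y) x)

/-- The `R`-span (for a subring `R ⊆ ℚ(u)`) of a family of vectors in a `ℚ(u)`-vector
space; used for the various integral forms. -/
def MA {ι V : Type*} [AddCommGroup V] [Module Fq V] (R : Subring Fq) (v : ι → V) :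
    Submodule (↥R) V :=
  Submodule.span (↥R) (Set.range v)

/-- The canonical element `1 ⊗ v z` of the base change `K ⊗_R (R-span of v)`. -/
def bce {ι V : Type*} [AddCommGroup V] [Module Fq V] (R : Subring Fq) (K : Type*)
    [CommRing K] [Algebra (↥R) K] (v : ι → V) (z : ι) :
    TensorProduct (↥R) K ↥(MA R v) :=
  (1 : K) ⊗ₜ[↥R] (⟨v z, Submodule.subset_span (Set.mem_range_self z)⟩ : ↥(MA R v))

/-- Right multiplication/action on a fixed element `Ξ` (e.g. `X_∅`), as a
`ℚ(u)`-linear map `h ↦ h • Ξ`. -/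
def smulXeF {H V : Type*} [Ring H] [Algebra Fq H] [AddCommGroup V] [Module Fq V]
    [Module H V] [IsScalarTower Fq H V] (Ξ : V) : H →ₗ[Fq] V where
  toFun h := h • Ξ
  map_add' h h' := add_smul h h' Ξ
  map_smul' c h := by simp [smul_assoc]

/-- The integral form `H_{R,u} X_∅`: the image of the `R`-span of the `T_w` under
`h ↦ h • Ξ`. -/
def NX {ι H V : Type*} [Ring H] [Algebra Fq H] [AddCommGroup V] [Module Fq V]
    [Module H V] [IsScalarTower Fq H V] (R : Subring Fq) (Tv : ι → H) (Ξ : V) :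
    Submodule (↥R) V :=
  Submodule.map ((smulXeF Ξ).restrictScalars (↥R)) (Submodule.span (↥R) (Set.range Tv))


section Coxeter

lemma star_wordProd {f : B → B} (hf : ∀ i, star (cs.simple i) = cs.simple (f i)) (ω : List B) :
    star (cs.wordProd ω) = cs.wordProd (ω.map f) := by
  induction ω with
  | nil => simp
  | cons i ω ih => rw [cs.wordProd_cons, map_mul, hf, ih, List.map_cons, cs.wordProd_cons]

lemma length_star (hst : ∀ v : W, star (star v) = v)
    (hS : ∀ i : B, ∃ j : B, star (cs.simple i) = cs.simple j) (w : W) :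
    cs.length (star w) = cs.length w := by
  choose f hf using hS
  have length_star_le (v : W) : cs.length (star v) ≤ cs.length v := by
    obtain ⟨ω, hω, rfl⟩ := cs.exists_isReduced v
    calc cs.length (star (cs.wordProd ω)) = cs.length (cs.wordProd (ω.map f)) := by
          rw [star_wordProd cs star hf]
      _ ≤ ω.length := (cs.length_wordProd_le _).trans_eq (List.length_map _)
      _ = cs.length (cs.wordProd ω) := hω.symm
  refine (length_star_le w).antisymm ?_
  simpa only [hst] using length_star_le (star w)

lemma bruhatLT_simple_mul_of_not_isLeftDescent {x : W} {i : B} (h : ¬cs.IsLeftDescent x i) :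
    BruhatLT cs x (cs.simple i * x) := by
  rw [cs.not_isLeftDescent_iff] at h
  obtain ⟨ω, hω, rfl⟩ := cs.exists_isReduced x
  refine ⟨⟨i :: ω, ?_, cs.wordProd_cons i ω, ω, List.sublist_cons_self i ω, hω, rfl⟩, ?_⟩
  · rw [CoxeterSystem.IsReduced, cs.wordProd_cons, h, hω, List.length_cons]
  · intro e
    rw [← e] at h
    omega

lemma simple_mul_bruhatLT_of_isLeftDescent {w : W} {i : B} (h : cs.IsLeftDescent w i) :
    BruhatLT cs (cs.simple i * w) w := by
  rw [cs.isLeftDescent_iff_not_isLeftDescent_mul] at h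
  simpa only [cs.simple_mul_simple_cancel_left] using
    bruhatLT_simple_mul_of_not_isLeftDescent cs h

lemma star_simple_mul_self (i : B) : star (cs.simple i) * star (cs.simple i) = 1 := by
  rw [← map_mul, cs.simple_mul_simple_self, map_one]

lemma mul_star_simple_cancel (i : B) (w : W) :
    w * star (cs.simple i) * star (cs.simple i) = w := by
  rw [mul_assoc, star_simple_mul_self, mul_one]

lemma simple_mul_simple_mul_mul_star (i : B) (w : W) :
    cs.simple i * (cs.simple i * w * star (cs.simple i)) = w * star (cs.simple i) := by
  rw [mul_assoc, cs.simple_mul_simple_cancel_left]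

lemma length_mul_star_simple {z : W} (hz : star z = z⁻¹) (hst : ∀ v : W, star (star v) = v)
    (hS : ∀ i : B, ∃ j : B, star (cs.simple i) = cs.simple j) (i : B) :
    cs.length (z * star (cs.simple i)) = cs.length (cs.simple i * z) := by
  have : (z * star (cs.simple i))⁻¹ = star (cs.simple i * z) := by
    rw [mul_inv_rev, ← map_inv, cs.inv_simple, map_mul, hz]
  rw [← cs.length_inv, this, length_star cs star hst hS]

lemma twMul_of_eq {i : B} {w : W} (h : cs.simple i * w = w * star (cs.simple i)) :
    twMul cs star i w = cs.simple i * w := if_pos h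

lemma twMul_of_ne {i : B} {w : W} (h : cs.simple i * w ≠ w * star (cs.simple i)) :
    twMul cs star i w = cs.simple i * w * star (cs.simple i) := if_neg h

lemma simple_mul_twMul_eq_iff (i : B) (w : W) :
    cs.simple i * twMul cs star i w = twMul cs star i w * star (cs.simple i) ↔
      cs.simple i * w = w * star (cs.simple i) := by
  by_cases h : cs.simple i * w = w * star (cs.simple i)
  · rw [twMul_of_eq cs star h, cs.simple_mul_simple_cancel_left, mul_assoc, ← h,
      cs.simple_mul_simple_cancel_left]
    simp only [h]
  · rw [twMul_of_ne cs star h, simple_mul_simple_mul_mul_star cs star, mul_star_simple_cancel]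
    exact ⟨fun e => absurd e.symm h, fun e => absurd e h⟩

lemma twMul_twMul (i : B) (w : W) : twMul cs star i (twMul cs star i w) = w := by
  by_cases h : cs.simple i * w = w * star (cs.simple i)
  · rw [twMul_of_eq cs star ((simple_mul_twMul_eq_iff cs star i w).mpr h), twMul_of_eq cs star h,
      cs.simple_mul_simple_cancel_left]
  · rw [twMul_of_ne cs star (mt (simple_mul_twMul_eq_iff cs star i w).mp h), twMul_of_ne cs star h,
      simple_mul_simple_mul_mul_star, mul_star_simple_cancel]

lemma twK_twK (hst : ∀ v : W, star (star v) = v) (i : B) (z : {w : W // star w = w⁻¹}) :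
    twK cs star hst i (twK cs star hst i z) = z :=
  Subtype.ext (twMul_twMul cs star i z.1)

end Coxeter

section Hecke

variable {cs} {R H : Type*} [CommRing R] [Ring H] [Algebra R H] {u : R} {T : Module.Basis W R H}

lemma IsHecke.simple_mul_simple (hH : IsHecke cs u T) (i : B) :
    T (cs.simple i) * T (cs.simple i) = (u ^ 2 - 1) • T (cs.simple i) + u ^ 2 • 1 := by
  set t := T (cs.simple i)
  set c := algebraMap R H (u ^ 2)
  rw [sub_smul, one_smul, Algebra.smul_def, Algebra.smul_def, mul_one]
  calc t * t = (t + 1) * (t - c) + (t * c - t + c) := by noncomm_ring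
    _ = c * t - t + c := by rw [hH.2.2 i, zero_add, (Algebra.commutes _ t).symm]

lemma IsHecke.simple_mul_of_not_isLeftDescent (hH : IsHecke cs u T) {w : W} {i : B}
    (h : ¬cs.IsLeftDescent w i) : T (cs.simple i) * T w = T (cs.simple i * w) :=
  hH.2.1 _ _ (by rw [cs.not_isLeftDescent_iff.mp h, cs.length_simple, add_comm])

lemma IsHecke.simple_mul_simple_mul_of_isLeftDescent (hH : IsHecke cs u T) {w : W} {i : B}
    (h : cs.IsLeftDescent w i) : T (cs.simple i) * T (cs.simple i * w) = T w := by
  rw [hH.simple_mul_of_not_isLeftDescent (cs.isLeftDescent_iff_not_isLeftDescent_mul.mp h),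
    cs.simple_mul_simple_cancel_left]

lemma IsHecke.simple_mul_of_isLeftDescent (hH : IsHecke cs u T) {w : W} {i : B}
    (h : cs.IsLeftDescent w i) :
    T (cs.simple i) * T w = (u ^ 2 - 1) • T w + u ^ 2 • T (cs.simple i * w) := by
  rw [← hH.simple_mul_simple_mul_of_isLeftDescent h, ← mul_assoc, hH.simple_mul_simple, add_mul,
    smul_mul_assoc, smul_mul_assoc, one_mul]

lemma IsHecke.simple_smul_simple_smul {Mu : Type*} [AddCommGroup Mu] [Module R Mu] [Module H Mu]
    [IsScalarTower R H Mu] (hH : IsHecke cs u T) (i : B) (m : Mu) :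
    T (cs.simple i) • T (cs.simple i) • m = (u ^ 2 - 1) • T (cs.simple i) • m + u ^ 2 • m := by
  rw [← mul_smul, hH.simple_mul_simple, add_smul, smul_assoc, smul_assoc, one_smul]

variable (A : Subring R)

lemma IsHecke.simple_mul_mem_span (hH : IsHecke cs u T) (hu : u ∈ A) (i : B) {h : H}
    (hh : h ∈ Submodule.span A (Set.range T)) :
    T (cs.simple i) * h ∈ Submodule.span A (Set.range T) := by
  have hT (w : W) : T w ∈ Submodule.span A (Set.range T) := Submodule.subset_span ⟨w, rfl⟩
  induction hh using Submodule.span_induction with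
  | mem _ hy =>
    obtain ⟨w, rfl⟩ := hy
    by_cases hd : cs.IsLeftDescent w i
    · rw [hH.simple_mul_of_isLeftDescent hd]
      have hu2 : u ^ 2 ∈ A := pow_mem hu 2
      exact add_mem (Submodule.smul_of_tower_mem _ (⟨_, sub_mem hu2 (one_mem A)⟩ : A) (hT w))
        (Submodule.smul_of_tower_mem _ (⟨_, hu2⟩ : A) (hT _))
    · rw [hH.simple_mul_of_not_isLeftDescent hd]
      exact hT _
  | zero => simp
  | add _ _ _ _ hx hy => rw [mul_add]; exact add_mem hx hy
  | smul c _ _ hx => rw [mul_smul_comm]; exact Submodule.smul_mem _ c hx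

lemma IsHecke.smul_mem_of_forall_simple_smul_mem {Mu : Type*} [AddCommGroup Mu] [Module R Mu]
    [Module H Mu] [IsScalarTower R H Mu] (hH : IsHecke cs u T) (N : Submodule A Mu)
    (hN : ∀ i : B, ∀ m ∈ N, T (cs.simple i) • m ∈ N) {h : H}
    (hh : h ∈ Submodule.span A (Set.range T)) {m : Mu} (hm : m ∈ N) : h • m ∈ N := by
  have hT (n : ℕ) : ∀ w : W, cs.length w = n → ∀ x ∈ N, T w • x ∈ N := by
    induction n with
    | zero =>
      intro w hw x hx
      rwa [cs.length_eq_zero_iff.mp hw, hH.1, one_smul]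
    | succ n ih =>
      intro w hw x hx
      obtain ⟨i, hi⟩ := cs.exists_leftDescent_of_ne_one (w := w) (by rintro rfl; simp at hw)
      rw [← hH.simple_mul_simple_mul_of_isLeftDescent hi, mul_smul]
      exact hN i _ (ih _ (by have := cs.isLeftDescent_iff.mp hi; omega) x hx)
  induction hh using Submodule.span_induction with
  | mem _ hy =>
    obtain ⟨w, rfl⟩ := hy
    exact hT _ w rfl m hm
  | zero => simp
  | add _ _ _ _ hx hy => rw [add_smul]; exact add_mem hx hy
  | smul c _ _ hx => rw [smul_assoc]; exact N.smul_mem c hx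

end Hecke

section LVModule

variable {cs star} {R H Mu : Type*} [CommRing R] [Ring H] [Algebra R H] [AddCommGroup Mu]
  [Module R Mu] [Module H Mu] {u : R} {T : Module.Basis W R H}
  {hst : ∀ v : W, star (star v) = v} {aB : Module.Basis {w : W // star w = w⁻¹} R Mu}

lemma LVRules.simple_smul_of_eq_of_not_isLeftDescent
    (hMu : LVRules cs star hst u aB (fun w m => T w • m)) {i : B} {z : {w : W // star w = w⁻¹}}
    (hc : cs.simple i * z.1 = z.1 * star (cs.simple i)) (hd : ¬cs.IsLeftDescent z.1 i) :
    T (cs.simple i) • aB z = u • aB z + (u + 1) • aB (twK cs star hst i z) :=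
  (hMu i z).1 hc (bruhatLT_simple_mul_of_not_isLeftDescent cs hd)

lemma LVRules.simple_smul_of_eq_of_isLeftDescent
    (hMu : LVRules cs star hst u aB (fun w m => T w • m)) {i : B} {z : {w : W // star w = w⁻¹}}
    (hc : cs.simple i * z.1 = z.1 * star (cs.simple i)) (hd : cs.IsLeftDescent z.1 i) :
    T (cs.simple i) • aB z = (u ^ 2 - u - 1) • aB z + (u ^ 2 - u) • aB (twK cs star hst i z) :=
  (hMu i z).2.1 hc (simple_mul_bruhatLT_of_isLeftDescent cs hd)

lemma LVRules.simple_smul_of_ne_of_not_isLeftDescent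
    (hMu : LVRules cs star hst u aB (fun w m => T w • m)) {i : B} {z : {w : W // star w = w⁻¹}}
    (hc : cs.simple i * z.1 ≠ z.1 * star (cs.simple i)) (hd : ¬cs.IsLeftDescent z.1 i) :
    T (cs.simple i) • aB z = aB (twK cs star hst i z) :=
  (hMu i z).2.2.1 hc (bruhatLT_simple_mul_of_not_isLeftDescent cs hd)

lemma LVRules.simple_smul_of_ne_of_isLeftDescent
    (hMu : LVRules cs star hst u aB (fun w m => T w • m)) {i : B} {z : {w : W // star w = w⁻¹}}
    (hc : cs.simple i * z.1 ≠ z.1 * star (cs.simple i)) (hd : cs.IsLeftDescent z.1 i) :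
    T (cs.simple i) • aB z = (u ^ 2 - 1) • aB z + u ^ 2 • aB (twK cs star hst i z) :=
  (hMu i z).2.2.2 hc (simple_mul_bruhatLT_of_isLeftDescent cs hd)

variable [IsScalarTower R H Mu]

lemma LVRules.simple_smul_mem_span (hMu : LVRules cs star hst u aB (fun w m => T w • m))
    (A : Subring R) (hu : u ∈ A) (i : B) {m : Mu}
    (hm : m ∈ Submodule.span A (Set.range aB)) :
    T (cs.simple i) • m ∈ Submodule.span A (Set.range aB) := by
  have ha (z) : aB z ∈ Submodule.span A (Set.range aB) := Submodule.subset_span ⟨z, rfl⟩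
  have hsmul {c : R} (hc : c ∈ A) (z) : c • aB z ∈ Submodule.span A (Set.range aB) :=
    Submodule.smul_of_tower_mem _ (⟨c, hc⟩ : A) (ha z)
  have hu2 : u ^ 2 ∈ A := pow_mem hu 2
  induction hm using Submodule.span_induction with
  | mem _ hy =>
    obtain ⟨z, rfl⟩ := hy
    by_cases hc : cs.simple i * z.1 = z.1 * star (cs.simple i) <;>
      by_cases hd : cs.IsLeftDescent z.1 i
    · rw [hMu.simple_smul_of_eq_of_isLeftDescent hc hd]
      exact add_mem (hsmul (sub_mem (sub_mem hu2 hu) (one_mem A)) _) (hsmul (sub_mem hu2 hu) _)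
    · rw [hMu.simple_smul_of_eq_of_not_isLeftDescent hc hd]
      exact add_mem (hsmul hu _) (hsmul (add_mem hu (one_mem A)) _)
    · rw [hMu.simple_smul_of_ne_of_isLeftDescent hc hd]
      exact add_mem (hsmul (sub_mem hu2 (one_mem A)) _) (hsmul hu2 _)
    · rw [hMu.simple_smul_of_ne_of_not_isLeftDescent hc hd]
      exact ha _
  | zero => simp
  | add _ _ _ _ hx hy => rw [smul_add]; exact add_mem hx hy
  | smul c _ _ hx => rw [smul_comm]; exact Submodule.smul_mem _ c hx

lemma LVRules.length_twMul_add_two_of_ne (hH : IsHecke cs u T)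
    (hMu : LVRules cs star hst u aB (fun w m => T w • m))
    (hS : ∀ i : B, ∃ j : B, star (cs.simple i) = cs.simple j) (hu : u ^ 4 ≠ u ^ 2)
    {i : B} {z : {w : W // star w = w⁻¹}}
    (hc : cs.simple i * z.1 ≠ z.1 * star (cs.simple i)) (hd : cs.IsLeftDescent z.1 i) :
    cs.length (twMul cs star i z.1) + 2 = cs.length z.1 := by
  set z' := twK cs star hst i z
  have hz' : z'.1 = cs.simple i * z.1 * star (cs.simple i) := twMul_of_ne cs star hc
  have hc' : cs.simple i * z'.1 ≠ z'.1 * star (cs.simple i) :=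
    mt (simple_mul_twMul_eq_iff cs star i z.1).mp hc
  have hsz' : cs.length (cs.simple i * z'.1) + 1 = cs.length z.1 := by
    rw [hz', simple_mul_simple_mul_mul_star, length_mul_star_simple cs star z.2 hst hS,
      cs.isLeftDescent_iff.mp hd]
  obtain ⟨j, hj⟩ := hS i
  rcases cs.length_mul_simple (cs.simple i * z.1) j with hup | hdown
  · -- Here `ℓ z' = ℓ z`, so `s` is a descent of both `z` and `z'`; computing `T_s² a_z` once by
    -- the two descent rules and once by the quadratic relation forces `u⁴ = u²`.
    exfalso
    have hd' : cs.IsLeftDescent z'.1 i := by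
      rw [cs.isLeftDescent_iff, hsz', hz', hj, hup, cs.isLeftDescent_iff.mp hd]
    have hne : z' ≠ z := by
      intro e
      apply hc
      calc cs.simple i * z.1 = cs.simple i * z.1 * star (cs.simple i) * star (cs.simple i) :=
            (mul_star_simple_cancel cs star i _).symm
        _ = z.1 * star (cs.simple i) := by rw [← hz', e]
    have hsq := hH.simple_smul_simple_smul i (aB z)
    conv_lhs at hsq => rw [hMu.simple_smul_of_ne_of_isLeftDescent hc hd, smul_add,
      smul_comm _ (u ^ 2 - 1), smul_comm _ (u ^ 2), hMu.simple_smul_of_ne_of_isLeftDescent hc' hd',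
      twK_twK]
    have hcoef := congrArg (fun m => aB.repr m z) hsq
    simp only [map_add, map_smul, Module.Basis.repr_self, Finsupp.smul_apply, Finsupp.add_apply,
      Finsupp.single_apply, if_neg hne, if_true, smul_eq_mul] at hcoef
    exact hu (by linear_combination hcoef)
  · rw [twMul_of_ne cs star hc, hj]
    have := cs.isLeftDescent_iff.mp hd
    omega

lemma LVRules.length_twMul_lt (hH : IsHecke cs u T)
    (hMu : LVRules cs star hst u aB (fun w m => T w • m))
    (hS : ∀ i : B, ∃ j : B, star (cs.simple i) = cs.simple j) (hu : u ^ 4 ≠ u ^ 2)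
    {i : B} {z : {w : W // star w = w⁻¹}} (hd : cs.IsLeftDescent z.1 i) :
    cs.length (twMul cs star i z.1) < cs.length z.1 := by
  by_cases hc : cs.simple i * z.1 = z.1 * star (cs.simple i)
  · rw [twMul_of_eq cs star hc]
    exact hd
  · have := hMu.length_twMul_add_two_of_ne hH hS hu hc hd
    omega

lemma LVRules.not_isLeftDescent_twMul (hH : IsHecke cs u T)
    (hMu : LVRules cs star hst u aB (fun w m => T w • m))
    (hS : ∀ i : B, ∃ j : B, star (cs.simple i) = cs.simple j) (hu : u ^ 4 ≠ u ^ 2)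
    {i : B} {z : {w : W // star w = w⁻¹}} (hd : cs.IsLeftDescent z.1 i) :
    ¬cs.IsLeftDescent (twMul cs star i z.1) i := by
  rw [cs.not_isLeftDescent_iff]
  by_cases hc : cs.simple i * z.1 = z.1 * star (cs.simple i)
  · rw [twMul_of_eq cs star hc, cs.simple_mul_simple_cancel_left]
    exact (cs.isLeftDescent_iff.mp hd).symm
  · have h2 := hMu.length_twMul_add_two_of_ne hH hS hu hc hd
    rw [twMul_of_ne cs star hc] at h2 ⊢
    rw [simple_mul_simple_mul_mul_star, length_mul_star_simple cs star z.2 hst hS]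
    have h1 := cs.isLeftDescent_iff.mp hd
    omega

end LVModule

lemma X_add_one_ne_zero : (RatFunc.X + 1 : Fq) ≠ 0 := by
  rw [← map_one (algebraMap (Polynomial ℚ) Fq), ← RatFunc.algebraMap_X (K := ℚ), ← map_add, ne_eq,
    map_eq_zero_iff _ (RatFunc.algebraMap_injective ℚ)]
  exact Polynomial.X_add_C_ne_zero 1

lemma X_pow_four_ne_X_sq : (RatFunc.X : Fq) ^ 4 ≠ RatFunc.X ^ 2 := by
  rw [← RatFunc.algebraMap_X (K := ℚ), ← map_pow, ← map_pow, ne_eq,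
    (RatFunc.algebraMap_injective ℚ).eq_iff]
  intro h
  simpa using congrArg Polynomial.natDegree h

lemma inv_X_add_one_mem_Apm : ((RatFunc.X + 1 : Fq))⁻¹ ∈ Apm := Subring.subset_closure (by simp)

lemma image_NX {ι H Mu Hh : Type*} [Ring H] [Algebra Fq H] [AddCommGroup Mu] [Module Fq Mu]
    [Module H Mu] [IsScalarTower Fq H Mu] [AddCommGroup Hh] [Module Fq Hh] [Module H Hh]
    [IsScalarTower Fq H Hh] (A : Subring Fq) (Tv : ι → H) (μ : Mu →ₗ[H] Hh) (Ξ : Mu) :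
    μ '' (NX A Tv Ξ : Set Mu) = NX A Tv (μ Ξ) := by
  ext ξ
  constructor
  · rintro ⟨_, ⟨h, hh, rfl⟩, rfl⟩
    exact ⟨h, hh, (map_smul μ h Ξ).symm⟩
  · rintro ⟨h, hh, rfl⟩
    exact ⟨h • Ξ, ⟨h, hh, rfl⟩, map_smul μ h Ξ⟩

section IntegralForms

variable {cs star} {H Mu : Type*} [Ring H] [Algebra Fq H] [AddCommGroup Mu] [Module Fq Mu]
  [Module H Mu] {T : Module.Basis W Fq H}
  {hst : ∀ v : W, star (star v) = v} {aB : Module.Basis {w : W // star w = w⁻¹} Fq Mu}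
  (A : Subring Fq)

lemma LVRules.basis_twK_mem_of_not_isLeftDescent
    (hMu : LVRules cs star hst (RatFunc.X : Fq) aB (fun w m => T w • m))
    (hu : (RatFunc.X : Fq) ∈ A) (hu1 : (RatFunc.X + 1 : Fq)⁻¹ ∈ A) {i : B} (N : Submodule A Mu)
    (hN : ∀ m ∈ N, T (cs.simple i) • m ∈ N) {z : {w : W // star w = w⁻¹}}
    (hd : ¬cs.IsLeftDescent z.1 i) (hz : aB z ∈ N) : aB (twK cs star hst i z) ∈ N := by
  by_cases hc : cs.simple i * z.1 = z.1 * star (cs.simple i)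
  · have h : aB (twK cs star hst i z) =
        (RatFunc.X + 1 : Fq)⁻¹ • (T (cs.simple i) • aB z - (RatFunc.X : Fq) • aB z) := by
      rw [hMu.simple_smul_of_eq_of_not_isLeftDescent hc hd, add_sub_cancel_left, smul_smul,
        inv_mul_cancel₀ X_add_one_ne_zero, one_smul]
    rw [h]
    exact N.smul_mem (⟨_, hu1⟩ : A) (sub_mem (hN _ hz) (N.smul_mem (⟨_, hu⟩ : A) hz))
  · rw [← hMu.simple_smul_of_ne_of_not_isLeftDescent hc hd]
    exact hN _ hz

variable [IsScalarTower Fq H Mu]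

lemma simple_smul_mem_NX (hH : IsHecke cs (RatFunc.X : Fq) T) (hu : (RatFunc.X : Fq) ∈ A)
    (Ξ : Mu) (i : B) {m : Mu} (hm : m ∈ NX A T Ξ) : T (cs.simple i) • m ∈ NX A T Ξ := by
  obtain ⟨h, hh, rfl⟩ := hm
  exact ⟨_, hH.simple_mul_mem_span A hu i hh, mul_smul _ _ _⟩

lemma LVRules.basis_mem_NX (hH : IsHecke cs (RatFunc.X : Fq) T)
    (hMu : LVRules cs star hst (RatFunc.X : Fq) aB (fun w m => T w • m))
    (hS : ∀ i : B, ∃ j : B, star (cs.simple i) = cs.simple j) (hu : (RatFunc.X : Fq) ∈ A)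
    (hu1 : (RatFunc.X + 1 : Fq)⁻¹ ∈ A) (z : {w : W // star w = w⁻¹}) :
    aB z ∈ NX A T (aB (oneI star)) := by
  induction hn : cs.length z.1 using Nat.strong_induction_on generalizing z with
  | _ n ih =>
    by_cases hz : z.1 = 1
    · obtain rfl : z = oneI star := Subtype.ext hz
      refine ⟨1, ?_, one_smul _ _⟩
      rw [← hH.1]
      exact Submodule.subset_span ⟨1, rfl⟩
    · obtain ⟨i, hi⟩ := cs.exists_leftDescent_of_ne_one hz
      rw [← twK_twK cs star hst i z]
      exact hMu.basis_twK_mem_of_not_isLeftDescent A hu hu1 _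
        (fun m => simple_smul_mem_NX A hH hu _ i)
        (hMu.not_isLeftDescent_twMul hH hS X_pow_four_ne_X_sq hi)
        (ih _ (hn ▸ hMu.length_twMul_lt hH hS X_pow_four_ne_X_sq hi) _ rfl)

lemma LVRules.NX_le_MA (hH : IsHecke cs (RatFunc.X : Fq) T)
    (hMu : LVRules cs star hst (RatFunc.X : Fq) aB (fun w m => T w • m))
    (hu : (RatFunc.X : Fq) ∈ A) : NX A T (aB (oneI star)) ≤ MA A aB := by
  rintro _ ⟨h, hh, rfl⟩
  exact hH.smul_mem_of_forall_simple_smul_mem A (MA A aB)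
    (fun i _ hm => hMu.simple_smul_mem_span A hu i hm) hh (Submodule.subset_span ⟨_, rfl⟩)

lemma LVRules.MA_eq_NX (hH : IsHecke cs (RatFunc.X : Fq) T)
    (hMu : LVRules cs star hst (RatFunc.X : Fq) aB (fun w m => T w • m))
    (hS : ∀ i : B, ∃ j : B, star (cs.simple i) = cs.simple j) (hu : (RatFunc.X : Fq) ∈ A)
    (hu1 : (RatFunc.X + 1 : Fq)⁻¹ ∈ A) : MA A aB = NX A T (aB (oneI star)) :=
  le_antisymm (Submodule.span_le.mpr (Set.range_subset_iff.mpr (hMu.basis_mem_NX A hH hS hu hu1)))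
    (hMu.NX_le_MA A hH hu)

end IntegralForms

theorem statement2_general
    {B W : Type*} [Group W] {M : CoxeterMatrix B} (cs : CoxeterSystem M W)
    (star : W ≃* W) (hst : ∀ v : W, star (star v) = v)
    (hS : ∀ i : B, ∃ j : B, star (cs.simple i) = cs.simple j)
    (H : Type*) [Ring H] [Algebra Fq H] (T : Module.Basis W Fq H)
    (hH : IsHecke cs (RatFunc.X : Fq) T)
    (Mu : Type*) [AddCommGroup Mu] [Module Fq Mu] [Module H Mu] [IsScalarTower Fq H Mu]
    (aB : Module.Basis {w : W // star w = w⁻¹} Fq Mu)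
    (hMu : LVRules cs star hst (RatFunc.X : Fq) (⇑aB) (fun w m => T w • m))
    (Hh : Type*) [AddCommGroup Hh] [Module Fq Hh] [Module H Hh] [IsScalarTower Fq H Hh]
    (Xe : Hh)
    (μ : Mu →ₗ[H] Hh) (hμone : μ (aB (oneI star)) = Xe)
    (hμinj : Function.Injective μ) :
    Set.InjOn ⇑μ (Submodule.span (↥Apm) (Set.range ⇑aB) : Set Mu) ∧
    ⇑μ '' (Submodule.span (↥Apm) (Set.range ⇑aB) : Set Mu) =
      {ξ : Hh | ∃ h ∈ Submodule.span (↥Apm) (Set.range ⇑T), ξ = h • Xe} := by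
  refine ⟨hμinj.injOn, ?_⟩
  have hMA := hMu.MA_eq_NX Apm hH hS X_mem_Apm inv_X_add_one_mem_Apm
  rw [MA] at hMA
  rw [hMA, image_NX, hμone]
  ext ξ
  exact ⟨fun ⟨h, hh, e⟩ => ⟨h, hh, e.symm⟩, fun ⟨h, hh, e⟩ => ⟨h, hh, e.symm⟩⟩

theorem statement2
    {B W : Type*} [Group W] {M : CoxeterMatrix B} (cs : CoxeterSystem M W)
    (star : W ≃* W) (hst : ∀ v : W, star (star v) = v)
    (hS : ∀ i : B, ∃ j : B, star (cs.simple i) = cs.simple j)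
    (H : Type*) [Ring H] [Algebra Fq H] (T : Module.Basis W Fq H)
    (hH : IsHecke cs (RatFunc.X : Fq) T)
    (Mu : Type*) [AddCommGroup Mu] [Module Fq Mu] [Module H Mu] [IsScalarTower Fq H Mu]
    (aB : Module.Basis {w : W // star w = w⁻¹} Fq Mu)
    (hMu : LVRules cs star hst (RatFunc.X : Fq) (⇑aB) (fun w m => T w • m))
    (Hh : Type*) [AddCommGroup Hh] [Module Fq Hh] [Module H Hh] [IsScalarTower Fq H Hh]
    (coords : Hh ≃ₗ[Fq] (W → Fq)) (hHh : IsHatAction T coords)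
    (Xe : Hh)
    (hXe : ∀ x : W, coords Xe x =
      if star x = x then (RatFunc.X : Fq) ^ (-(cs.length x : ℤ)) else 0)
    (μ : Mu →ₗ[H] Hh) (hμone : μ (aB (oneI star)) = Xe)
    (hμinj : Function.Injective μ)
    (hμrange : LinearMap.range μ = Submodule.span H {Xe}) :
    Set.InjOn ⇑μ (Submodule.span (↥Apm) (Set.range ⇑aB) : Set Mu) ∧
    ⇑μ '' (Submodule.span (↥Apm) (Set.range ⇑aB) : Set Mu) =
      {ξ : Hh | ∃ h ∈ Submodule.span (↥Apm) (Set.range ⇑T), ξ = h • Xe} :=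
  statement2_general cs star hst hS H T hH Mu aB hMu Hh Xe μ hμone hμinj

end IUIM
end
end

section
/- Let w ∈ I_* and s ∈ S with sw ≠ ws*. Then the following are equivalent: ℓ(sw) = ℓ(w)+1; ℓ(ws*) = ℓ(w)+1; ℓ(sws*) = ℓ(w)+2. The same equivalences hold with '+' replaced by '−' throughout. -/
set_option synthInstance.maxHeartbeats 1000000
set_option maxHeartbeats 2000000

open scoped Classical TensorProduct

noncomputable section

namespace CoxeterSystem

variable {B W : Type*} [Group W] {M : CoxeterMatrix B} (cs : CoxeterSystem M W)

theorem simple_mul_mul_simple_eq_iff (i : B) (t u : W) :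
    cs.simple i * t * cs.simple i = u ↔ t = cs.simple i * u * cs.simple i := by
  constructor <;> rintro rfl <;> simp [mul_assoc]

theorem conj_simple_mul_simple_eq_iff (i j : B) (t : W) (r : ℕ) :
    cs.simple i * cs.simple j * t * (cs.simple i * cs.simple j)⁻¹ =
        cs.simple j * (cs.simple i * cs.simple j) ^ r ↔
      t = cs.simple j * (cs.simple i * cs.simple j) ^ (r + 2) := by
  have hq : (cs.simple i * cs.simple j)⁻¹ * cs.simple j =
      cs.simple j * (cs.simple i * cs.simple j) := by
    simp only [mul_inv_rev, inv_simple, mul_assoc]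
  generalize cs.simple i * cs.simple j = q at hq ⊢
  rw [mul_inv_eq_iff_eq_mul, ← eq_inv_mul_iff_mul_eq, ← mul_assoc, ← mul_assoc, hq]
  group

/-- The action of `sᵢ` in the permutation representation behind the exchange property, with all
of `W` in place of the set of reflections. -/
def reflRepGen (i : B) : Equiv.Perm (W × ZMod 2) :=
  Function.Involutive.toPerm
    (fun p => (cs.simple i * p.1 * cs.simple i, p.2 + if p.1 = cs.simple i then 1 else 0))
    (by
      rintro ⟨t, ε⟩
      refine Prod.ext ?_ ?_
      · simp [mul_assoc]
      · dsimp only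
        rw [simple_mul_mul_simple_eq_iff, simple_mul_simple_self, one_mul, add_assoc,
          CharTwo.add_self_eq_zero, add_zero])

theorem reflRepGen_apply (i : B) (p : W × ZMod 2) :
    cs.reflRepGen i p =
      (cs.simple i * p.1 * cs.simple i, p.2 + if p.1 = cs.simple i then 1 else 0) :=
  rfl

theorem reflRepGen_mul_apply (i j : B) (t : W) (ε : ZMod 2) :
    (cs.reflRepGen i * cs.reflRepGen j) (t, ε) =
      (cs.simple i * cs.simple j * t * (cs.simple i * cs.simple j)⁻¹,
        ε + ∑ r ∈ Finset.range 2,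
          if t = cs.simple j * (cs.simple i * cs.simple j) ^ r then 1 else 0) := by
  rw [Equiv.Perm.mul_apply, reflRepGen_apply, reflRepGen_apply]
  refine Prod.ext ?_ ?_
  · simp only [mul_inv_rev, inv_simple, mul_assoc]
  · dsimp only
    rw [simple_mul_mul_simple_eq_iff, Finset.sum_range_succ, Finset.sum_range_one, pow_zero,
      mul_one, pow_one, add_assoc, mul_assoc]

theorem reflRepGen_mul_pow_apply (i j : B) (k : ℕ) (t : W) (ε : ZMod 2) :
    ((cs.reflRepGen i * cs.reflRepGen j) ^ k) (t, ε) =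
      ((cs.simple i * cs.simple j) ^ k * t * ((cs.simple i * cs.simple j) ^ k)⁻¹,
        ε + ∑ r ∈ Finset.range (2 * k),
          if t = cs.simple j * (cs.simple i * cs.simple j) ^ r then 1 else 0) := by
  induction k generalizing t ε with
  | zero => simp
  | succ k ih =>
    rw [pow_succ, Equiv.Perm.mul_apply, reflRepGen_mul_apply, ih]
    refine Prod.ext (by simp only [pow_succ, mul_inv_rev, mul_assoc]) ?_
    rw [show 2 * (k + 1) = 2 + 2 * k by ring, Finset.sum_range_add, add_assoc]
    simp only [conj_simple_mul_simple_eq_iff, add_comm _ 2]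

theorem isLiftable_reflRepGen : M.IsLiftable cs.reflRepGen := by
  intro i j
  ext ⟨t, ε⟩ : 1
  have hq : (cs.simple i * cs.simple j) ^ M i j = 1 := cs.simple_mul_simple_pow i j
  rw [reflRepGen_mul_pow_apply, hq, two_mul, Finset.sum_range_add]
  simp [pow_add, hq, CharTwo.add_self_eq_zero]

def reflRep : W →* Equiv.Perm (W × ZMod 2) := cs.lift ⟨cs.reflRepGen, cs.isLiftable_reflRepGen⟩

theorem reflRep_simple_mul_apply (i : B) (w : W) (p : W × ZMod 2) :
    cs.reflRep (cs.simple i * w) p = cs.reflRepGen i (cs.reflRep w p) := by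
  rw [map_mul, reflRep, cs.lift_apply_simple, Equiv.Perm.mul_apply]

theorem reflRep_apply_fst (w t : W) (ε : ZMod 2) : (cs.reflRep w (t, ε)).1 = w * t * w⁻¹ := by
  induction w using cs.simple_induction_left with
  | one => simp
  | mul_simple_left w i ih =>
    rw [reflRep_simple_mul_apply, reflRepGen_apply, ih]
    simp only [mul_inv_rev, inv_simple, mul_assoc]

def rightInvParity (w t : W) : ZMod 2 := (cs.reflRep w (t, 0)).2

theorem rightInvParity_simple_mul (i : B) (w t : W) :
    cs.rightInvParity (cs.simple i * w) t =
      cs.rightInvParity w t + if w * t * w⁻¹ = cs.simple i then 1 else 0 := by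
  rw [rightInvParity, reflRep_simple_mul_apply, reflRepGen_apply, reflRep_apply_fst]
  rfl

theorem rightInvParity_wordProd (ω : List B) (t : W) :
    cs.rightInvParity (cs.wordProd ω) t = (cs.rightInvSeq ω).count t := by
  induction ω with
  | nil => simp [rightInvParity]
  | cons i ω ih =>
    have hconj : (cs.wordProd ω)⁻¹ * cs.simple i * cs.wordProd ω = t ↔
        cs.wordProd ω * t * (cs.wordProd ω)⁻¹ = cs.simple i := by
      constructor <;> intro h <;> rw [← h] <;> group
    rw [wordProd_cons, rightInvParity_simple_mul, ih, rightInvSeq, List.count_cons]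
    simp [hconj]

theorem rightInvParity_simple (w : W) (j : B) :
    cs.rightInvParity w (cs.simple j) = if cs.IsRightDescent w j then 1 else 0 := by
  by_cases hw : cs.IsRightDescent w j
  · obtain ⟨ω, hω, hωw⟩ := cs.exists_isReduced (w * cs.simple j)
    have hmem : cs.simple j ∉ cs.rightInvSeq ω := fun hm => by
      have := (cs.isRightInversion_simple_iff_isRightDescent _ _).mp
        (cs.isRightInversion_of_mem_rightInvSeq hω hm)
      rw [IsRightDescent, ← hωw, simple_mul_simple_cancel_right] at this
      exact lt_asymm this hw
    have hcount : ((cs.rightInvSeq ω).map (MulAut.conj (cs.simple j))).count (cs.simple j) =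
        (cs.rightInvSeq ω).count (cs.simple j) := by
      nth_rewrite 1 [show cs.simple j = MulAut.conj (cs.simple j) (cs.simple j) by simp]
      exact List.count_map_of_injective _ _ (MulAut.conj (cs.simple j)).injective _
    rw [if_pos hw, show w = cs.wordProd (ω.concat j) by
        rw [wordProd_concat, ← hωw, simple_mul_simple_cancel_right],
      rightInvParity_wordProd, rightInvSeq_concat, List.concat_eq_append, List.count_append,
      hcount, List.count_eq_zero_of_not_mem hmem]
    simp
  · obtain ⟨ω, hω, rfl⟩ := cs.exists_isReduced w
    have hmem : cs.simple j ∉ cs.rightInvSeq ω := fun hm =>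
      hw ((cs.isRightInversion_simple_iff_isRightDescent _ _).mp
        (cs.isRightInversion_of_mem_rightInvSeq hω hm))
    rw [if_neg hw, rightInvParity_wordProd, List.count_eq_zero_of_not_mem hmem, Nat.cast_zero]

theorem isRightDescent_simple_mul_iff {i j : B} {w : W}
    (h : cs.simple i * w ≠ w * cs.simple j) :
    cs.IsRightDescent (cs.simple i * w) j ↔ cs.IsRightDescent w j := by
  have hconj : w * cs.simple j * w⁻¹ ≠ cs.simple i := fun he => h (by rw [← he]; group)
  have hη := cs.rightInvParity_simple_mul i w (cs.simple j)
  rw [if_neg hconj, add_zero, rightInvParity_simple, rightInvParity_simple] at hη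
  split_ifs at hη <;> simp_all

theorem length_apply_le {F : Type*} [FunLike F W W] [MonoidHomClass F W W] (σ : F)
    (hσ : ∀ i, ∃ j, σ (cs.simple i) = cs.simple j) (w : W) : cs.length (σ w) ≤ cs.length w := by
  choose f hf using hσ
  obtain ⟨ω, hω, rfl⟩ := cs.exists_isReduced w
  have hσω : σ (cs.wordProd ω) = cs.wordProd (ω.map f) := by
    simp only [wordProd, map_list_prod, List.map_map, Function.comp_def, hf]
  calc cs.length (σ (cs.wordProd ω)) ≤ (ω.map f).length := hσω ▸ cs.length_wordProd_le _
    _ = cs.length (cs.wordProd ω) := by rw [List.length_map, hω.eq]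

theorem length_apply_eq_of_involutive {F : Type*} [FunLike F W W] [MonoidHomClass F W W] (σ : F)
    (hσ : ∀ i, ∃ j, σ (cs.simple i) = cs.simple j) (hσσ : ∀ w, σ (σ w) = w) (w : W) :
    cs.length (σ w) = cs.length w :=
  (cs.length_apply_le σ hσ w).antisymm (by simpa only [hσσ] using cs.length_apply_le σ hσ (σ w))

end CoxeterSystem

namespace IUIM

-- The section variables of the definitions above, in whose context `statement7` is stated.
variable {B W : Type*} [Group W] {M : CoxeterMatrix B} (cs : CoxeterSystem M W) (star : W ≃* W)

theorem statement7
    {B W : Type*} [Group W] {M : CoxeterMatrix B} (cs : CoxeterSystem M W)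
    (star : W ≃* W) (hst : ∀ v : W, star (star v) = v)
    (hS : ∀ i : B, ∃ j : B, star (cs.simple i) = cs.simple j)
    (w : W) (hw : star w = w⁻¹) (i : B)
    (hne : cs.simple i * w ≠ w * star (cs.simple i)) :
    ((cs.length (cs.simple i * w) = cs.length w + 1 ↔
      cs.length (w * star (cs.simple i)) = cs.length w + 1) ∧
     (cs.length (cs.simple i * w) = cs.length w + 1 ↔
      cs.length (cs.simple i * w * star (cs.simple i)) = cs.length w + 2)) ∧
    ((cs.length (cs.simple i * w) + 1 = cs.length w ↔
      cs.length (w * star (cs.simple i)) + 1 = cs.length w) ∧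
     (cs.length (cs.simple i * w) + 1 = cs.length w ↔
      cs.length (cs.simple i * w * star (cs.simple i)) + 2 = cs.length w)) := by
  have hlen : cs.length (w * star (cs.simple i)) = cs.length (cs.simple i * w) := by
    rw [← cs.length_apply_eq_of_involutive star hS hst, map_mul, hw, hst, ← cs.length_inv,
      mul_inv_rev, inv_inv, cs.inv_simple]
  obtain ⟨j, hj⟩ := hS i
  rw [hj] at hne hlen ⊢
  have hdesc := cs.isRightDescent_simple_mul_iff hne
  have hleft := cs.length_simple_mul w i
  have hright := cs.length_mul_simple (cs.simple i * w) j
  unfold CoxeterSystem.IsRightDescent at hdesc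
  omega

end IUIM
end
end
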